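/- Let a ∈ [0,1) and define F_a(x,y) = (√(|y|² - |x|²|y|² + ⟨x,y⟩²) + a⟨x,y⟩)/(1-|x|²) on T𝔹ⁿ. Then the reversibility λ_{F_a}(𝔹ⁿ) = sup_{x ∈ 𝔹ⁿ, y ≠ 0} F_a(x,-y)/F_a(x,y) equals (1+a)/(1-a). -/

import Mathlib

/-!
Replacing `a` by `-a` turns `F_a(x, y)` into `F_a(x, -y)`, so with `s = ⟪x, y⟫` and
`Q = √(|y|² - |x|²|y|² + s²)` the ratio is `(Q - a s) / (Q + a s)`. On the ball `|s| < Q`,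
so the bound `(Q - a s) / (Q + a s) ≤ (1 + a) / (1 - a)` reduces to `a (Q + s) ≥ 0`.
Conversely, along a ray `x = -r e`, `y = e` with `|e| = 1` the ratio is
`(1 + a r) / (1 - a r)`, which tends to `(1 + a) / (1 - a)` as `r → 1`.
-/

open scoped RealInnerProductSpace
open Set

noncomputable def funkA (n : ℕ) (a : ℝ) (x y : EuclideanSpace ℝ (Fin n)) : ℝ :=
  (Real.sqrt (‖y‖ ^ 2 - ‖x‖ ^ 2 * ‖y‖ ^ 2 + ⟪x, y⟫ ^ 2) + a * ⟪x, y⟫) / (1 - ‖x‖ ^ 2)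

lemma sub_mul_div_add_mul_le {a q s : ℝ} (ha0 : 0 ≤ a) (ha1 : a < 1) (hs : |s| < q) :
    (q - a * s) / (q + a * s) ≤ (1 + a) / (1 - a) := by
  obtain ⟨hsq, hqs⟩ := abs_lt.mp hs
  have hden : 0 < q + a * s := by nlinarith
  rw [div_le_div_iff₀ hden (by linarith)]
  nlinarith

lemma abs_inner_lt_sqrt {E : Type*} [NormedAddCommGroup E] [InnerProductSpace ℝ E] {x y : E}
    (hx : ‖x‖ < 1) (hy : y ≠ 0) :
    |⟪x, y⟫| < Real.sqrt (‖y‖ ^ 2 - ‖x‖ ^ 2 * ‖y‖ ^ 2 + ⟪x, y⟫ ^ 2) := by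
  have hx2 : ‖x‖ ^ 2 < 1 := by nlinarith [norm_nonneg x]
  have hy2 : 0 < ‖y‖ ^ 2 := by positivity
  rw [Real.lt_sqrt (abs_nonneg _), sq_abs]
  nlinarith

section funkA

variable {n : ℕ} {a : ℝ}

lemma funkA_neg_right (x y : EuclideanSpace ℝ (Fin n)) : funkA n a x (-y) = funkA n (-a) x y := by
  simp only [funkA, inner_neg_right, norm_neg, neg_sq, mul_neg, neg_mul]

lemma funkA_neg_div_funkA_le (ha0 : 0 ≤ a) (ha1 : a < 1) {x y : EuclideanSpace ℝ (Fin n)}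
    (hx : ‖x‖ < 1) (hy : y ≠ 0) :
    funkA n a x (-y) / funkA n a x y ≤ (1 + a) / (1 - a) := by
  have hD : 1 - ‖x‖ ^ 2 ≠ 0 := by nlinarith [norm_nonneg x]
  rw [funkA_neg_right, funkA, funkA, div_div_div_cancel_right₀ hD, neg_mul, ← sub_eq_add_neg]
  exact sub_mul_div_add_mul_le ha0 ha1 (abs_inner_lt_sqrt hx hy)

lemma funkA_smul_smul {e : EuclideanSpace ℝ (Fin n)} (he : ‖e‖ = 1) (r c : ℝ) :
    funkA n a (r • e) (c • e) = (|c| + a * r * c) / (1 - r ^ 2) := by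
  have hinner : ⟪r • e, c • e⟫ = r * c := by
    rw [real_inner_smul_left, real_inner_smul_right, real_inner_self_eq_norm_sq, he]; ring
  rw [funkA, hinner, norm_smul, norm_smul, he, Real.norm_eq_abs, Real.norm_eq_abs, mul_pow,
    mul_pow, sq_abs, sq_abs, one_pow, mul_one, mul_one,
    show c ^ 2 - r ^ 2 * c ^ 2 + (r * c) ^ 2 = c ^ 2 by ring, Real.sqrt_sq_eq_abs]
  ring

lemma funkA_neg_div_funkA_smul {e : EuclideanSpace ℝ (Fin n)} (he : ‖e‖ = 1) {r : ℝ}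
    (hr : |r| < 1) :
    funkA n a (-r • e) (-e) / funkA n a (-r • e) e = (1 + a * r) / (1 - a * r) := by
  have hD : 1 - (-r) ^ 2 ≠ 0 := by nlinarith [abs_nonneg r, sq_abs r]
  rw [← neg_one_smul ℝ e, funkA_smul_smul he, ← one_smul ℝ e, smul_smul, mul_one,
    funkA_smul_smul he, div_div_div_cancel_right₀ hD]
  norm_num [sub_eq_add_neg]

end funkA

/-- For `a ∈ [0,1)`, the reversibility of `F_a` on `𝔹ⁿ` equals `(1+a)/(1-a)`. -/
theorem funkA_reversibility (n : ℕ) (hn : 1 ≤ n) (a : ℝ) (ha0 : 0 ≤ a) (ha1 : a < 1) :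
    sSup {t : ℝ | ∃ x y : EuclideanSpace ℝ (Fin n),
        ‖x‖ < 1 ∧ y ≠ 0 ∧ t = funkA n a x (-y) / funkA n a x y}
      = (1 + a) / (1 - a) := by
  set S := {t : ℝ | ∃ x y : EuclideanSpace ℝ (Fin n),
      ‖x‖ < 1 ∧ y ≠ 0 ∧ t = funkA n a x (-y) / funkA n a x y}
  have hub : (1 + a) / (1 - a) ∈ upperBounds S := by
    rintro _ ⟨x, y, hx, hy, rfl⟩
    exact funkA_neg_div_funkA_le ha0 ha1 hx hy
  set e := EuclideanSpace.single (⟨0, hn⟩ : Fin n) (1 : ℝ)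
  have he : ‖e‖ = 1 := by simp [e]
  let g : ℝ → ℝ := fun r => (1 + a * r) / (1 - a * r)
  have hray : MapsTo g (Ico 0 1) S := by
    rintro r ⟨hr0, hr1⟩
    have hr : |r| < 1 := by rwa [abs_of_nonneg hr0]
    refine ⟨-r • e, e, ?_, ?_, (funkA_neg_div_funkA_smul he hr).symm⟩
    · simpa [norm_smul, he] using hr
    · simp [← norm_pos_iff, he]
  have hlim : g 1 ∈ closure (g '' Ico 0 1) :=
    ContinuousWithinAt.mem_closure_image (by fun_prop (disch := linarith)) (by simp [closure_Ico])
  simp only [g, mul_one] at hlim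
  exact (isLUB_of_mem_closure hub (closure_mono hray.image_subset hlim)).csSup_eq
    ⟨_, hray (left_mem_Ico.mpr one_pos)⟩
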